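/- The Baker–Akhiezer functions and adjoint Baker–Akhiezer functions of the extended KP hierarchy satisfy: (i) P ψ(z) = z ψ(z), P* ψ†(z) = z ψ†(z), P̂ ψ̂(z) = z⁻¹ ψ̂(z), P̂* ψ̂†(z) = z⁻¹ ψ̂†(z); (ii) for every k ≥ 1 and each ψ̇ ∈ {ψ, ψ̂} and ψ̇† ∈ {ψ†, ψ̂†}: ∂ψ̇(z)/∂t_k = (P^k)₊ ψ̇(z), ∂ψ̇(z)/∂t̂_k = −(P̂^k)₋ ψ̇(z), ∂ψ̇†(z)/∂t_k = −((P^k)₊)* ψ̇†(z), ∂ψ̇†(z)/∂t̂_k = ((P̂^k)₋)* ψ̇†(z). -/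

import Mathlib

/-!
Each (adjoint) Baker–Akhiezer function is a dressed vector `u • e`, where `u` is one of `Φ`, `Φ̂`,
`(Φ⁻¹)*`, `(Φ̂⁻¹)*` and the exponential `e` is an eigenvector of `∂` and of all flows.
Conjugation by `u` turns `∂ e = z e` into `P ψ = z ψ` (for the adjoint functions via `∂* = -∂`).
For the flows, the Leibniz rule gives `∂ₖ ψ = (∂ₖ u) • e + u • ∂ₖ e`. With the Sato equation
`∂ₖ Φ = -(Pᵏ)₋ Φ` and `∂ₖ e = zᵏ e` this is `-(Pᵏ)₋ ψ + Pᵏ ψ = (Pᵏ)₊ ψ`. For the adjoint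
functions, `∂ₖ Φ = N Φ` implies `∂ₖ (Φ⁻¹)* = -N* (Φ⁻¹)*`. The extra term `-δ_{k1} P̂⁻¹` in the
`t₁`-flow of `Φ̂` is cancelled by the `x`-dependence of `e^{xz}`, because `P̂⁻¹ ψ̂ = z ψ̂`.
-/

section Eigen

variable {D K W : Type*} [Ring D] [Semiring K] [AddCommGroup W] [Module D W] [Module K W]
  [SMulCommClass D K W]

theorem smul_eq_inv_smul_of_mul_eq_one {a b : D} {e : W} {c : Kˣ} (hba : b * a = 1)
    (h : a • e = (c : K) • e) : b • e = ((c⁻¹ : Kˣ) : K) • e := by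
  calc b • e = ((c⁻¹ : Kˣ) : K) • b • ((c : K) • e) := by
        rw [smul_comm b, smul_smul, ← Units.val_mul, inv_mul_cancel, Units.val_one,
          one_smul]
    _ = ((c⁻¹ : Kˣ) : K) • e := by rw [← h, smul_smul, hba, one_smul]

theorem conj_smul_smul_eq {u v a : D} {e : W} {c : K} (hvu : v * u = 1)
    (h : a • e = c • e) : (u * a * v) • (u • e) = c • (u • e) := by
  rw [mul_smul, mul_smul, smul_smul v, hvu, one_smul, h, smul_comm]

theorem star_units_conj_smul_eq [StarRing D] (U : Dˣ) {a : D} {e : W} {c : K}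
    (h : star a • e = c • e) :
    star (↑U * a * ↑U⁻¹) • (star (↑U⁻¹ : D) • e) = c • (star (↑U⁻¹ : D) • e) := by
  rw [star_mul, star_mul, ← mul_assoc]
  exact conj_smul_smul_eq (by rw [← star_mul, Units.inv_mul, star_one]) h

theorem pow_smul_eq_of_smul_eq {a : D} {e : W} {c : K} (h : a • e = c • e) (k : ℕ) :
    a ^ k • e = c ^ k • e := by
  induction k with
  | zero => simp
  | succ k ih => rw [pow_succ, mul_smul, h, smul_comm, ih, smul_smul, ← pow_succ']

theorem star_units_inv_smul_eq [StarRing D] {U : Dˣ} {e : W} {c : Kˣ}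
    (h : star (U : D) • e = (c : K) • e) : star (↑U⁻¹ : D) • e = ((c⁻¹ : Kˣ) : K) • e :=
  smul_eq_inv_smul_of_mul_eq_one (by rw [← star_mul, Units.mul_inv, star_one]) h

theorem star_pow_smul_eq_of_star_smul_eq [StarRing D] {a : D} {e : W} {c : K}
    (h : star a • e = c • e) (k : ℕ) : star (a ^ k) • e = c ^ k • e := by
  rw [star_pow]
  exact pow_smul_eq_of_smul_eq h k

end Eigen

theorem star_smul_eq_of_star_eq_neg {D K W : Type*} [Ring D] [StarRing D] [Semiring K]
    [AddCommGroup W] [Module D W] [Module K W] {a : D} {e : W} {c : K} (ha : star a = -a)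
    (h : a • e = -(c • e)) : star a • e = c • e := by
  rw [ha, neg_smul, h, neg_neg]

section Leibniz

variable {D : Type*} [Ring D] {δ : D → D} (hδ : ∀ x y, δ (x * y) = δ x * y + x * δ y)
include hδ

theorem leibniz_one : δ 1 = 0 := by
  simpa using hδ 1 1

theorem leibniz_units_inv (U : Dˣ) : δ ↑U⁻¹ = -(↑U⁻¹ * δ U * ↑U⁻¹) := by
  have h := hδ U ↑U⁻¹
  rw [Units.mul_inv, leibniz_one hδ] at h
  calc δ ↑U⁻¹ = ↑U⁻¹ * (U * δ ↑U⁻¹) := by rw [← mul_assoc, Units.inv_mul, one_mul]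
    _ = -(↑U⁻¹ * δ U * ↑U⁻¹) := by
      rw [eq_neg_of_add_eq_zero_right h.symm, mul_neg, mul_assoc]

theorem leibniz_star_units_inv [StarRing D] (hδ_star : ∀ x, δ (star x) = star (δ x))
    {U : Dˣ} {N : D} (hU : δ U = N * U) :
    δ (star (↑U⁻¹ : D)) = -star N * star (↑U⁻¹ : D) := by
  rw [hδ_star, leibniz_units_inv hδ, hU, mul_assoc, mul_assoc, Units.mul_inv, mul_one,
    star_neg, star_mul, neg_mul]

end Leibniz

section DressedFlow

variable {D K W : Type*} [Ring D] [Semiring K] [AddCommGroup W] [Module D W] [Module K W]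
  [SMulCommClass D K W] {δ : D → D} {δw : W → W}
  (hδw : ∀ (x : D) (w : W), δw (x • w) = δ x • w + x • δw w)
include hδw

theorem flow_smul_of_flow_eq_zero {u N : D} {e : W} (hu : δ u = N * u) (he : δw e = 0) :
    δw (u • e) = N • (u • e) := by
  rw [hδw, hu, he, mul_smul, smul_zero, add_zero]

theorem flow_smul_eq_of_dressing_neg {u a b : D} {e : W} {c : K} (hu : δ u = -b * u)
    (he : δw e = c • e) (hL : (a + b) • (u • e) = c • (u • e)) :
    δw (u • e) = a • (u • e) := by
  rw [hδw, hu, he, mul_smul, smul_comm u c e, ← hL, add_smul, neg_smul,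
    neg_add_cancel_comm_assoc]

theorem flow_smul_eq_neg_of_dressing {u a b : D} {e : W} {c : K} (hu : δ u = a * u)
    (he : δw e = -(c • e)) (hL : (a + b) • (u • e) = c • (u • e)) :
    δw (u • e) = -(b • (u • e)) := by
  rw [hδw, hu, he, mul_smul, smul_neg, smul_comm u c e, ← hL, add_smul]
  abel

theorem flow_smul_of_dressing_sub_ite {u a x : D} {e : W} {c : K} {p : Prop} [Decidable p]
    (hu : δ u = (a - if p then x else 0) * u) (he : δw e = if p then c • e else 0)
    (hx : x • (u • e) = c • (u • e)) : δw (u • e) = a • (u • e) := by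
  rw [hδw, hu, he, mul_smul, sub_smul]
  split_ifs <;> simp [hx, smul_comm u c e]

end DressedFlow

section AdjointDressedFlow

variable {D K W : Type*} [Ring D] [StarRing D] [Semiring K] [AddCommGroup W] [Module D W]
  [Module K W] [SMulCommClass D K W] {δ : D → D} {δw : W → W}
  (hδ : ∀ x y, δ (x * y) = δ x * y + x * δ y) (hδ_star : ∀ x, δ (star x) = star (δ x))
  (hδw : ∀ (x : D) (w : W), δw (x • w) = δ x • w + x • δw w)
include hδ hδ_star hδw

theorem flow_star_inv_smul_of_flow_eq_zero {U : Dˣ} {b : D} {e : W} (hU : δ U = -b * U)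
    (he : δw e = 0) : δw (star (↑U⁻¹ : D) • e) = star b • (star (↑U⁻¹ : D) • e) := by
  rw [flow_smul_of_flow_eq_zero hδw (leibniz_star_units_inv hδ hδ_star hU) he, star_neg,
    neg_neg]

theorem flow_star_inv_smul_eq_of_dressing {U : Dˣ} {a b : D} {e : W} {c : K}
    (hU : δ U = a * U) (he : δw e = c • e)
    (hL : star (a + b) • (star (↑U⁻¹ : D) • e) = c • (star (↑U⁻¹ : D) • e)) :
    δw (star (↑U⁻¹ : D) • e) = star b • (star (↑U⁻¹ : D) • e) := by
  refine flow_smul_eq_of_dressing_neg hδw (leibniz_star_units_inv hδ hδ_star hU) he ?_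
  rwa [add_comm, ← star_add]

theorem flow_star_inv_smul_eq_neg_of_dressing_neg {U : Dˣ} {a b : D} {e : W} {c : K}
    (hU : δ U = -b * U) (he : δw e = -(c • e))
    (hL : star (a + b) • (star (↑U⁻¹ : D) • e) = c • (star (↑U⁻¹ : D) • e)) :
    δw (star (↑U⁻¹ : D) • e) = -(star a • (star (↑U⁻¹ : D) • e)) := by
  have hu := leibniz_star_units_inv hδ hδ_star hU
  rw [star_neg, neg_neg] at hu
  refine flow_smul_eq_neg_of_dressing hδw hu he ?_
  rwa [add_comm, ← star_add]

theorem flow_star_inv_smul_of_dressing_sub_ite {U : Dˣ} {a x : D} {e : W} {c : K} {p : Prop}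
    [Decidable p] (hU : δ U = (a - if p then x else 0) * U)
    (he : δw e = if p then -(c • e) else 0)
    (hx : star x • (star (↑U⁻¹ : D) • e) = c • (star (↑U⁻¹ : D) • e)) :
    δw (star (↑U⁻¹ : D) • e) = -(star a • (star (↑U⁻¹ : D) • e)) := by
  rw [hδw, leibniz_star_units_inv hδ hδ_star hU, he, mul_smul, star_sub, neg_sub, sub_smul]
  split_ifs <;> simp [hx, smul_comm (star (↑U⁻¹ : D)) c e, sub_eq_add_neg]

end AdjointDressedFlow

theorem stmt_9 {D : Type*} [Ring D] {K : Type*} [Field K]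
    {W : Type*} [AddCommGroup W] [Module K W]
    (pos neg : D → D)
    (hsplit : ∀ x, pos x + neg x = x)
    (star : D → D)
    (hstar_add : ∀ x y, star (x + y) = star x + star y)
    (hstar_mul : ∀ x y, star (x * y) = star y * star x)
    (hstar_star : ∀ x, star (star x) = x)
    (del Φ Φh : Dˣ)
    (hstar_del : star (del : D) = -(del : D))
    (T Th : ℕ → D → D)
    (hT_mul : ∀ k x y, T k (x * y) = T k x * y + x * T k y)
    (hT_star : ∀ k x, T k (star x) = star (T k x))
    (hTh_mul : ∀ k x y, Th k (x * y) = Th k x * y + x * Th k y)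
    (hTh_star : ∀ k x, Th k (star x) = star (Th k x))
    -- the action of operators on wave functions
    (act : D → W → W)
    (hact_add : ∀ x y w, act (x + y) w = act x w + act y w)
    (hact_addw : ∀ x w w', act x (w + w') = act x w + act x w')
    (hact_mul : ∀ x y w, act (x * y) w = act x (act y w))
    (hact_one : ∀ w, act 1 w = w)
    (hact_smul : ∀ x (c : K) w, act x (c • w) = c • act x w)
    -- the flows on wave functions
    (Tw Thw : ℕ → W → W)
    (hTw_leib : ∀ k x w, Tw k (act x w) = act (T k x) w + act x (Tw k w))
    (hThw_leib : ∀ k x w, Thw k (act x w) = act (Th k x) w + act x (Thw k w))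
    -- the nonzero parameter z and the exponential wave vectors
    (z : Kˣ) (E Eh Ed Ehd : W)
    (hE_del : act (del : D) E = (z : K) • E)
    (hE_T : ∀ k : ℕ, 1 ≤ k → Tw k E = ((z ^ k : Kˣ) : K) • E)
    (hE_Th : ∀ k : ℕ, 1 ≤ k → Thw k E = 0)
    (hEh_del : act (del : D) Eh = (z : K) • Eh)
    (hEh_T : ∀ k : ℕ, 1 ≤ k → Tw k Eh = if k = 1 then (z : K) • Eh else 0)
    (hEh_Th : ∀ k : ℕ, 1 ≤ k → Thw k Eh = -(((z⁻¹ ^ k : Kˣ) : K) • Eh))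
    (hEd_del : act (del : D) Ed = -((z : K) • Ed))
    (hEd_T : ∀ k : ℕ, 1 ≤ k → Tw k Ed = -(((z ^ k : Kˣ) : K) • Ed))
    (hEd_Th : ∀ k : ℕ, 1 ≤ k → Thw k Ed = 0)
    (hEhd_del : act (del : D) Ehd = -((z : K) • Ehd))
    (hEhd_T : ∀ k : ℕ, 1 ≤ k → Tw k Ehd = if k = 1 then -((z : K) • Ehd) else 0)
    (hEhd_Th : ∀ k : ℕ, 1 ≤ k → Thw k Ehd = ((z⁻¹ ^ k : Kˣ) : K) • Ehd) :
    let P : Dˣ := Φ * del * Φ⁻¹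
    let Ph : Dˣ := Φh * del⁻¹ * Φh⁻¹
    -- the extended KP hierarchy:
    (∀ k : ℕ, 1 ≤ k →
      T k (Φ : D) = -(neg ((P ^ k : Dˣ) : D)) * (Φ : D)) →
    (∀ k : ℕ, 1 ≤ k →
      T k (Φh : D)
        = (pos ((P ^ k : Dˣ) : D) - (if k = 1 then ((Ph⁻¹ : Dˣ) : D) else 0))
            * (Φh : D)) →
    (∀ k : ℕ, 1 ≤ k →
      Th k (Φ : D) = -(neg ((Ph ^ k : Dˣ) : D)) * (Φ : D)) →
    (∀ k : ℕ, 1 ≤ k →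
      Th k (Φh : D) = pos ((Ph ^ k : Dˣ) : D) * (Φh : D)) →
    -- the (adjoint) Baker–Akhiezer functions
    (let ψ : W := act (Φ : D) E
     let ψh : W := act (Φh : D) Eh
     let ψd : W := act (star ((Φ⁻¹ : Dˣ) : D)) Ed
     let ψhd : W := act (star ((Φh⁻¹ : Dˣ) : D)) Ehd
     -- (i)
     (act (P : D) ψ = (z : K) • ψ ∧
      act (star (P : D)) ψd = (z : K) • ψd ∧
      act (Ph : D) ψh = ((z⁻¹ : Kˣ) : K) • ψh ∧
      act (star (Ph : D)) ψhd = ((z⁻¹ : Kˣ) : K) • ψhd) ∧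
     -- (ii)
     (∀ k : ℕ, 1 ≤ k →
      Tw k ψ = act (pos ((P ^ k : Dˣ) : D)) ψ ∧
      Tw k ψh = act (pos ((P ^ k : Dˣ) : D)) ψh ∧
      Thw k ψ = -(act (neg ((Ph ^ k : Dˣ) : D)) ψ) ∧
      Thw k ψh = -(act (neg ((Ph ^ k : Dˣ) : D)) ψh) ∧
      Tw k ψd = -(act (star (pos ((P ^ k : Dˣ) : D))) ψd) ∧
      Tw k ψhd = -(act (star (pos ((P ^ k : Dˣ) : D))) ψhd) ∧
      Thw k ψd = act (star (neg ((Ph ^ k : Dˣ) : D))) ψd ∧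
      Thw k ψhd = act (star (neg ((Ph ^ k : Dˣ) : D))) ψhd)) := by
  intro P Ph hKP1 hKP2 hKP3 hKP4
  let _ : SMul D W := ⟨act⟩
  let _ : Module D W := Module.ofMinimalAxioms hact_addw hact_add hact_mul hact_one
  have _ : SMulCommClass D K W := ⟨hact_smul⟩
  let _ : StarRing D :=
    { star, star_involutive := hstar_star, star_mul := hstar_mul, star_add := hstar_add }
  have hPh_inv : Ph⁻¹ = Φh * del * Φh⁻¹ := by simp [Ph, mul_assoc]
  have hEd := star_smul_eq_of_star_eq_neg hstar_del hEd_del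
  have hEhd := star_smul_eq_of_star_eq_neg hstar_del hEhd_del
  have eig_P := conj_smul_smul_eq (Units.inv_mul Φ) hE_del
  have eig_starP := star_units_conj_smul_eq Φ hEd
  have eig_Ph := conj_smul_smul_eq (Units.inv_mul Φh)
    (smul_eq_inv_smul_of_mul_eq_one (Units.inv_mul del) hEh_del)
  have eig_starPh := star_units_conj_smul_eq Φh (star_units_inv_smul_eq hEhd)
  refine ⟨⟨eig_P, eig_starP, eig_Ph, eig_starPh⟩,
    fun k hk => ⟨?_, ?_, ?_, ?_, ?_, ?_, ?_, ?_⟩⟩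
  · exact flow_smul_eq_of_dressing_neg (hTw_leib k) (hKP1 k hk) (hE_T k hk)
      ((hsplit _).symm ▸ pow_smul_eq_of_smul_eq eig_P k)
  · exact flow_smul_of_dressing_sub_ite (hTw_leib k) (hKP2 k hk) (hEh_T k hk)
      (hPh_inv ▸ conj_smul_smul_eq (Units.inv_mul Φh) hEh_del)
  · exact (flow_smul_of_flow_eq_zero (hThw_leib k) (hKP3 k hk) (hE_Th k hk)).trans
      (neg_smul _ _)
  · exact flow_smul_eq_neg_of_dressing (hThw_leib k) (hKP4 k hk) (hEh_Th k hk)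
      ((hsplit _).symm ▸ pow_smul_eq_of_smul_eq eig_Ph k)
  · exact flow_star_inv_smul_eq_neg_of_dressing_neg (hT_mul k) (hT_star k) (hTw_leib k)
      (hKP1 k hk) (hEd_T k hk) ((hsplit _).symm ▸ star_pow_smul_eq_of_star_smul_eq eig_starP k)
  · exact flow_star_inv_smul_of_dressing_sub_ite (hT_mul k) (hT_star k) (hTw_leib k)
      (hKP2 k hk) (hEhd_T k hk) (hPh_inv ▸ star_units_conj_smul_eq Φh hEhd)
  · exact flow_star_inv_smul_of_flow_eq_zero (hTh_mul k) (hTh_star k) (hThw_leib k)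
      (hKP3 k hk) (hEd_Th k hk)
  · exact flow_star_inv_smul_eq_of_dressing (hTh_mul k) (hTh_star k) (hThw_leib k) (hKP4 k hk)
      (hEhd_Th k hk) ((hsplit _).symm ▸ star_pow_smul_eq_of_star_smul_eq eig_starPh k)
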